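/- For each n ≥ 1 with n ≥ 2, the map b ↦ λ_n(b), where λ_n(b) is the unique solution of Ai'(-λ) - b·Ai(-λ) = 0 in the interval (-a_{n-1}, -a_n) (a_k the zeros of Ai), is continuously differentiable on ℝ with derivative λ_n'(b) = 1/(λ_n(b) + b²). -/

import Mathlib

/-- The Airy function of the first kind, Ai(x) = (1/π) lim_{R→∞} ∫₀^R cos(t³/3 + xt) dt. -/
noncomputable def airyAi (x : ℝ) : ℝ :=
  Filter.limUnder Filter.atTop
    (fun R : ℝ => (1 / Real.pi) * ∫ t in (0:ℝ)..R, Real.cos (t ^ 3 / 3 + x * t))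

open Set Filter Topology MeasureTheory Complex Real

/-!
Rotating the contour of the Airy integral onto the ray `arg z = π/6`, where `z³ = i s³`, gives
`Ai x = Re (rot * ∫₀^∞ exp (-s³/3 + i rot x s) ds) / π` with `rot = exp (iπ/6)`: an absolutely
convergent integral that may be differentiated under the integral sign, and an integration by
parts turns its second derivative into Airy's equation `Ai'' = x Ai`.

On `(-a_{n-1}, -a_n)` the function `μ ↦ Ai (-μ)` has no zero, so `β μ = Ai' (-μ) / Ai (-μ)` is
smooth there, and by Airy's equation it solves the Riccati equation `β' = μ + β² > 0`. Hence `β`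
is a strictly increasing bijection onto `ℝ` whose inverse is `λ_n`, and the inverse function
theorem gives `λ_n' b = 1 / (λ_n b + b²)`.
-/

section SectorRotation

variable {f : ℂ → ℂ}

theorem hasDerivAt_integral_rotate (hf : Differentiable ℂ f) (R θ₀ : ℝ) :
    HasDerivAt (fun θ : ℝ => ∫ s in (0:ℝ)..R, cexp (θ * I) * f (cexp (θ * I) * s))
      (I * (R * cexp (θ₀ * I) * f (cexp (θ₀ * I) * R))) θ₀ := by
  set u : ℝ → ℂ := fun θ => cexp (θ * I)
  have hu : ∀ θ, HasDerivAt u (u θ * I) θ := fun θ => by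
    simpa using ((hasDerivAt_id θ).ofReal_comp.mul_const I).cexp
  have hfc : Continuous f := hf.continuous
  have hf' : Continuous (deriv f) := (hf.contDiff (n := 1)).continuous_deriv le_rfl
  -- ∂θ of the integrand is `I` times ∂s of `s * u θ * f (u θ * s)`
  set D : ℝ → ℝ → ℂ := fun θ s => u θ * (f (u θ * s) + u θ * s * deriv f (u θ * s))
  have hDcont : Continuous (Function.uncurry D) := by
    simp only [D, u]; fun_prop
  have hθ : ∀ θ s : ℝ, HasDerivAt (fun θ : ℝ => u θ * f (u θ * s)) (I * D θ s) θ := fun θ s => by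
    refine ((hu θ).mul (((hf _).hasDerivAt).comp θ ((hu θ).mul_const (s : ℂ)))).congr_deriv ?_
    simp only [D, Function.comp_apply]; ring
  have hs : ∀ θ s : ℝ, HasDerivAt (fun s : ℝ => (s : ℂ) * (u θ * f (u θ * s))) (D θ s) s :=
    fun θ s => by
    have hl : HasDerivAt (fun s : ℝ => u θ * (s : ℂ)) (u θ) s := by
      simpa using (hasDerivAt_id s).ofReal_comp.const_mul (u θ)
    refine ((hasDerivAt_id s).ofReal_comp.mul
      ((((hf _).hasDerivAt).comp s hl).const_mul (u θ))).congr_deriv ?_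
    simp only [D, Function.comp_apply, id, ofReal_one]; ring
  obtain ⟨C, hC⟩ := ((isCompact_closedBall θ₀ 1).prod
    (isCompact_uIcc (a := (0:ℝ)) (b := R))).exists_bound_of_continuousOn hDcont.continuousOn
  have hDs : Continuous (D θ₀) := hDcont.comp (by fun_prop : Continuous fun s : ℝ => (θ₀, s))
  have key := intervalIntegral.hasDerivAt_integral_of_dominated_loc_of_deriv_le
    (F' := fun θ s => I * D θ s) (bound := fun _ => C) (Metric.ball_mem_nhds θ₀ one_pos)
    (Eventually.of_forall fun θ =>
      (by simp only [u]; fun_prop : Continuous _).aestronglyMeasurable)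
    ((by simp only [u]; fun_prop : Continuous _).intervalIntegrable _ _)
    (hDs.const_mul I).aestronglyMeasurable
    (ae_of_all _ fun s hs θ hθ => by
      rw [norm_mul, norm_I, one_mul]
      exact hC (θ, s) ⟨Metric.ball_subset_closedBall hθ, uIoc_subset_uIcc hs⟩)
    (intervalIntegrable_const (μ := volume)) (ae_of_all _ fun s _ θ _ => hθ θ s)
  refine key.2.congr_deriv ?_
  rw [intervalIntegral.integral_const_mul,
    intervalIntegral.integral_eq_sub_of_hasDerivAt (fun s _ => hs θ₀ s)
      (hDs.intervalIntegrable _ _)]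
  simp [u, mul_assoc]

theorem integral_eq_integral_rotate_sub_integral_arc (hf : Differentiable ℂ f) (R φ : ℝ) :
    ∫ t in (0:ℝ)..R, f t = (∫ s in (0:ℝ)..R, cexp (φ * I) * f (cexp (φ * I) * s))
      - ∫ θ in (0:ℝ)..φ, I * (R * cexp (θ * I) * f (cexp (θ * I) * R)) := by
  have hfc : Continuous f := hf.continuous
  rw [intervalIntegral.integral_eq_sub_of_hasDerivAt
    (fun θ _ => hasDerivAt_integral_rotate hf R θ)
    ((by fun_prop : Continuous _).intervalIntegrable _ _)]
  simp

end SectorRotation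

theorem mul_le_cube_div_six_add (M : ℝ) {s : ℝ} (hs : 0 ≤ s) :
    M * s ≤ s ^ 3 / 6 + 2 * M ^ 2 + 2 := by
  rcases le_total (s ^ 2) (6 * |M|) with h | h
  · nlinarith [le_abs_self M, sq_abs M, sq_nonneg (|M| - 3 / 2), sq_nonneg (s - |M|),
      pow_nonneg hs 3]
  · nlinarith [le_abs_self M, abs_nonneg M]

theorem integrableOn_pow_mul_exp_neg_cube_add_mul (k : ℕ) (M : ℝ) :
    IntegrableOn (fun s : ℝ => s ^ k * Real.exp (-s ^ 3 / 3 + M * s)) (Ioi 0) := by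
  have h := (integrableOn_rpow_mul_exp_neg_mul_rpow (s := k) (p := 3) (b := 1 / 6)
    (by linarith [k.cast_nonneg (α := ℝ)]) (by norm_num) (by norm_num)).const_mul
    (Real.exp (2 * M ^ 2 + 2))
  refine h.mono' (by fun_prop) ?_
  filter_upwards [ae_restrict_mem measurableSet_Ioi] with s (hs : 0 < s)
  rw [Real.norm_of_nonneg (by positivity), Real.rpow_natCast, Real.rpow_ofNat, mul_left_comm,
    ← Real.exp_add]
  have := mul_le_cube_div_six_add M hs.le
  gcongr _ * Real.exp ?_
  linarith

theorem integral_exp_neg_mul_le {c : ℝ} (hc : 0 < c) (b : ℝ) :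
    ∫ θ in (0:ℝ)..b, Real.exp (-c * θ) ≤ 1 / c := by
  rw [intervalIntegral.integral_comp_mul_left (fun t => Real.exp t) (neg_ne_zero.2 hc.ne'),
    integral_exp, mul_zero, Real.exp_zero, smul_eq_mul, inv_neg, neg_mul, ← mul_neg, neg_sub,
    ← div_eq_inv_mul]
  gcongr
  linarith [Real.exp_pos (-c * b)]

noncomputable section

namespace Airy

def phase (x : ℝ) (z : ℂ) : ℂ := cexp (I * (z ^ 3 / 3 + x * z))

def rot : ℂ := cexp (↑(π / 6) * I)

def kernel (x s : ℝ) : ℂ := cexp (-(s : ℂ) ^ 3 / 3 + I * rot * x * s)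

def moment (k : ℕ) (x : ℝ) : ℂ := ∫ s in Ioi 0, (I * rot * s) ^ k * kernel x s

theorem rot_pow_three : rot ^ 3 = I := by
  rw [rot, ← Complex.exp_nat_mul, show ((3 : ℕ) : ℂ) * (↑(π / 6) * I) = ↑(π / 2) * I by
    push_cast; ring, Complex.exp_mul_I]
  push_cast
  simp

theorem norm_rot : ‖rot‖ = 1 := Complex.norm_exp_ofReal_mul_I _

theorem norm_I_mul_rot : ‖I * rot‖ = 1 := by rw [norm_mul, norm_I, norm_rot, one_mul]

theorem re_I_mul_rot : (I * rot).re = -(1 / 2) := by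
  rw [I_mul_re, rot, Complex.exp_ofReal_mul_I_im, Real.sin_pi_div_six]

theorem phase_rot_mul (x s : ℝ) : phase x (rot * s) = kernel x s := by
  rw [phase, kernel, mul_pow, rot_pow_three]
  congr 1
  linear_combination ((s : ℂ) ^ 3 / 3) * I_sq

theorem continuous_pow_mul_kernel (k : ℕ) (x : ℝ) :
    Continuous fun s : ℝ => (I * rot * s) ^ k * kernel x s := by
  unfold kernel; fun_prop

theorem norm_pow_mul_kernel (k : ℕ) (x : ℝ) {s : ℝ} (hs : 0 ≤ s) :
    ‖(I * rot * s) ^ k * kernel x s‖ = s ^ k * Real.exp (-s ^ 3 / 3 - x * s / 2) := by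
  rw [norm_mul, norm_pow, norm_mul, norm_I_mul_rot, one_mul, norm_real, Real.norm_of_nonneg hs,
    kernel, Complex.norm_exp]
  congr 2
  have : -(s : ℂ) ^ 3 / 3 + I * rot * x * s
      = ((-s ^ 3 / 3 : ℝ) : ℂ) + (x * s : ℝ) * (I * rot) := by
    push_cast; ring
  rw [this, add_re, ofReal_re, re_ofReal_mul, re_I_mul_rot]
  ring

theorem norm_pow_mul_kernel_le (k : ℕ) {x M s : ℝ} (hxM : -x / 2 ≤ M) (hs : 0 ≤ s) :
    ‖(I * rot * s) ^ k * kernel x s‖ ≤ s ^ k * Real.exp (-s ^ 3 / 3 + M * s) := by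
  rw [norm_pow_mul_kernel k x hs]
  gcongr _ * Real.exp ?_
  nlinarith

theorem integrableOn_pow_mul_kernel (k : ℕ) (x : ℝ) :
    IntegrableOn (fun s : ℝ => (I * rot * s) ^ k * kernel x s) (Ioi 0) := by
  refine (integrableOn_pow_mul_exp_neg_cube_add_mul k |x|).mono'
    (continuous_pow_mul_kernel k x).aestronglyMeasurable ?_
  filter_upwards [ae_restrict_mem measurableSet_Ioi] with s (hs : 0 < s)
  exact norm_pow_mul_kernel_le k (by linarith [neg_le_abs x, abs_nonneg x]) hs.le

theorem hasDerivAt_kernel (x s : ℝ) :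
    HasDerivAt (fun x => kernel x s) (I * rot * s * kernel x s) x := by
  have : HasDerivAt (fun x : ℝ => -(s : ℂ) ^ 3 / 3 + I * rot * x * s) (I * rot * s) x := by
    simpa using (((hasDerivAt_id x).ofReal_comp.const_mul (I * rot)).mul_const (s : ℂ)).const_add
      (-(s : ℂ) ^ 3 / 3)
  exact this.cexp.congr_deriv (mul_comm _ _)

theorem hasDerivAt_moment (k : ℕ) (x : ℝ) : HasDerivAt (moment k) (moment (k + 1) x) x := by
  have key := hasDerivAt_integral_of_dominated_loc_of_deriv_le (μ := volume.restrict (Ioi 0))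
    (F := fun x s => (I * rot * s) ^ k * kernel x s)
    (F' := fun x s => (I * rot * s) ^ (k + 1) * kernel x s)
    (bound := fun s => s ^ (k + 1) * Real.exp (-s ^ 3 / 3 + (|x| + 1) * s))
    (Metric.ball_mem_nhds x one_pos)
    (Eventually.of_forall fun y => (continuous_pow_mul_kernel k y).aestronglyMeasurable)
    (integrableOn_pow_mul_kernel k x)
    (continuous_pow_mul_kernel (k + 1) x).aestronglyMeasurable ?_
    (integrableOn_pow_mul_exp_neg_cube_add_mul (k + 1) (|x| + 1))
    (ae_of_all _ fun s y _ => ((hasDerivAt_kernel y s).const_mul _).congr_deriv (by ring))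
  · exact key.2
  filter_upwards [ae_restrict_mem measurableSet_Ioi] with s (hs : 0 < s) y hy
  have hy' : |y| < |x| + 1 := by
    have := abs_sub_abs_le_abs_sub y x
    rw [Metric.mem_ball, Real.dist_eq] at hy
    linarith
  exact norm_pow_mul_kernel_le (k + 1) (by linarith [neg_le_abs y, abs_nonneg y]) hs.le

theorem hasDerivAt_kernel_right (x s : ℝ) :
    HasDerivAt (kernel x) ((-(s : ℂ) ^ 2 + I * rot * x) * kernel x s) s := by
  have hs := (hasDerivAt_id s).ofReal_comp
  have : HasDerivAt (fun s : ℝ => -(s : ℂ) ^ 3 / 3 + I * rot * x * s)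
      (-(s : ℂ) ^ 2 + I * rot * x) s := by
    refine (((hs.pow 3).neg.div_const 3).add (hs.const_mul (I * rot * x))).congr_deriv ?_
    simp only [id, ofReal_one]; ring
  exact this.cexp.congr_deriv (mul_comm _ _)

theorem moment_two (x : ℝ) : rot * moment 2 x = x * (rot * moment 0 x) - I := by
  have hpt : ∀ s : ℝ,
      rot * ((I * rot * s) ^ 2 * kernel x s) - x * rot * ((I * rot * s) ^ 0 * kernel x s)
        = I * ((-(s : ℂ) ^ 2 + I * rot * x) * kernel x s) := fun s => by
    linear_combination (I ^ 2 * (s : ℂ) ^ 2 * kernel x s) * rot_pow_three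
      + (I * (s : ℂ) ^ 2 * kernel x s - rot * x * kernel x s) * I_sq
  have h2 := (integrableOn_pow_mul_kernel 2 x).const_mul rot
  have h0 := (integrableOn_pow_mul_kernel 0 x).const_mul (x * rot)
  have hint : IntegrableOn (fun s : ℝ => (-(s : ℂ) ^ 2 + I * rot * x) * kernel x s) (Ioi 0) :=
    IntegrableOn.congr_fun ((h2.sub h0).const_mul (-I)) (fun s _ => by
      rw [Pi.sub_apply, hpt]
      linear_combination (-((-(s : ℂ) ^ 2 + I * rot * x) * kernel x s)) * I_sq)
      measurableSet_Ioi
  have hK : IntegrableOn (kernel x) (Ioi 0) := by simpa using integrableOn_pow_mul_kernel 0 x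
  have hibp : ∫ s in Ioi (0 : ℝ), (-(s : ℂ) ^ 2 + I * rot * x) * kernel x s = -1 := by
    rw [integral_Ioi_of_hasDerivAt_of_tendsto
      (by unfold kernel; fun_prop : Continuous (kernel x)).continuousWithinAt
      (fun s _ => hasDerivAt_kernel_right x s) hint
      (tendsto_zero_of_hasDerivAt_of_integrableOn_Ioi (fun s _ => hasDerivAt_kernel_right x s)
        hint hK)]
    simp [kernel]
  have : rot * moment 2 x - x * (rot * moment 0 x) = I * -1 := by
    rw [← hibp, ← integral_const_mul, ← funext hpt, integral_sub h2 h0, integral_const_mul,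
      integral_const_mul, moment, moment]
    ring
  linear_combination this

theorem norm_phase_exp_mul_I_mul (x R θ : ℝ) :
    ‖phase x (cexp (θ * I) * R)‖
      = Real.exp (-(R ^ 3 * Real.sin (3 * θ)) / 3 - x * R * Real.sin θ) := by
  rw [phase, Complex.norm_exp]
  congr 1
  have : I * ((cexp (θ * I) * R) ^ 3 / 3 + x * (cexp (θ * I) * R))
      = ((R ^ 3 / 3 : ℝ) : ℂ) * (I * cexp (↑(3 * θ) * I))
        + ((x * R : ℝ) : ℂ) * (I * cexp (θ * I)) := by
    rw [mul_pow, ← Complex.exp_nat_mul]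
    push_cast
    ring_nf
  rw [this, add_re, re_ofReal_mul, re_ofReal_mul, I_mul_re, I_mul_re,
    Complex.exp_ofReal_mul_I_im, Complex.exp_ofReal_mul_I_im]
  ring

theorem norm_phase_arc_le {x R θ : ℝ} (hR : 0 < R) (hxR : π * |x| ≤ R ^ 2)
    (hθ : θ ∈ Icc 0 (π / 6)) : ‖phase x (cexp (θ * I) * R)‖ ≤ Real.exp (-(R ^ 3 / π) * θ) := by
  rw [norm_phase_exp_mul_I_mul, Real.exp_le_exp]
  have hjordan : 2 / π * (3 * θ) ≤ Real.sin (3 * θ) :=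
    Real.mul_le_sin (by linarith [hθ.1]) (by linarith [hθ.2])
  have hsin : -(x * Real.sin θ) ≤ |x| * θ := by
    have h0 : 0 ≤ Real.sin θ :=
      Real.sin_nonneg_of_nonneg_of_le_pi hθ.1 (by linarith [hθ.2, pi_pos])
    nlinarith [neg_abs_le x, Real.sin_le hθ.1, abs_nonneg x]
  have hpi := pi_pos
  rw [div_mul_eq_mul_div, div_le_iff₀ hpi] at hjordan
  have h1 := mul_le_mul_of_nonneg_left hjordan (by positivity : (0 : ℝ) ≤ R ^ 3 / 3)
  have h2 := mul_le_mul_of_nonneg_left hsin (by positivity : (0 : ℝ) ≤ π * R)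
  have h3 := mul_le_mul_of_nonneg_right hxR (mul_nonneg hθ.1 hR.le)
  have : R ^ 3 / π * θ ≤ R ^ 3 * Real.sin (3 * θ) / 3 + x * R * Real.sin θ := by
    rw [div_mul_eq_mul_div, div_le_iff₀ hpi]
    linarith
  linarith

theorem norm_integral_arc_le {x R : ℝ} (hR : 0 < R) (hxR : π * |x| ≤ R ^ 2) :
    ‖∫ θ in (0:ℝ)..π / 6, I * (R * cexp (θ * I) * phase x (cexp (θ * I) * R))‖ ≤ π / R ^ 2 := by
  refine (intervalIntegral.norm_integral_le_of_norm_le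
    (g := fun θ => R * Real.exp (-(R ^ 3 / π) * θ)) (by positivity)
    (ae_of_all _ fun θ hθ => ?_) (Continuous.intervalIntegrable (by fun_prop) _ _)).trans ?_
  · rw [norm_mul, norm_I, one_mul, norm_mul, norm_mul, norm_real, Real.norm_of_nonneg hR.le,
      Complex.norm_exp_ofReal_mul_I, mul_one]
    exact mul_le_mul_of_nonneg_left (norm_phase_arc_le hR hxR (Ioc_subset_Icc_self hθ)) hR.le
  · rw [intervalIntegral.integral_const_mul]
    calc R * ∫ θ in (0:ℝ)..π / 6, Real.exp (-(R ^ 3 / π) * θ) ≤ R * (1 / (R ^ 3 / π)) := by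
          gcongr; exact integral_exp_neg_mul_le (by positivity) _
      _ = π / R ^ 2 := by field_simp

theorem tendsto_integral_arc (x : ℝ) :
    Tendsto (fun R : ℝ =>
      ∫ θ in (0:ℝ)..π / 6, I * (R * cexp (θ * I) * phase x (cexp (θ * I) * R))) atTop (𝓝 0) := by
  refine squeeze_zero_norm' ?_
    ((tendsto_const_nhds (x := π)).div_atTop (tendsto_pow_atTop two_ne_zero))
  filter_upwards [eventually_gt_atTop 0,
    (tendsto_pow_atTop two_ne_zero).eventually_ge_atTop (π * |x|)] with R hR hxR
  exact norm_integral_arc_le hR hxR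

theorem tendsto_integral_phase (x : ℝ) :
    Tendsto (fun R : ℝ => ∫ t in (0:ℝ)..R, phase x t) atTop (𝓝 (rot * moment 0 x)) := by
  have hdiff : Differentiable ℂ (phase x) := by unfold phase; fun_prop
  have hK : IntegrableOn (kernel x) (Ioi 0) := by simpa using integrableOn_pow_mul_kernel 0 x
  have hrot : Tendsto (fun R : ℝ => ∫ s in (0:ℝ)..R, rot * phase x (rot * s)) atTop
      (𝓝 (rot * moment 0 x)) := by
    simp_rw [phase_rot_mul, intervalIntegral.integral_const_mul, moment, pow_zero, one_mul]
    exact (intervalIntegral_tendsto_integral_Ioi 0 hK tendsto_id).const_mul rot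
  have h := hrot.sub (tendsto_integral_arc x)
  rw [sub_zero] at h
  exact h.congr fun R =>
    (integral_eq_integral_rotate_sub_integral_arc hdiff R (π / 6)).symm

theorem re_phase_ofReal (x t : ℝ) : (phase x t).re = Real.cos (t ^ 3 / 3 + x * t) := by
  rw [phase, show I * ((t : ℂ) ^ 3 / 3 + x * t) = ((t ^ 3 / 3 + x * t : ℝ) : ℂ) * I by
    push_cast; ring, Complex.exp_ofReal_mul_I_re]

theorem airyAi_eq (x : ℝ) : airyAi x = (rot * moment 0 x).re / π := by
  refine Tendsto.limUnder_eq ?_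
  refine (((continuous_re.tendsto _).comp (tendsto_integral_phase x)).div_const π).congr
    fun R => ?_
  have hint : IntervalIntegrable (fun t : ℝ => phase x t) volume 0 R :=
    (by unfold phase; fun_prop : Continuous fun t : ℝ => phase x t).intervalIntegrable _ _
  simpa [re_phase_ofReal, div_eq_inv_mul] using
    (congrArg (· / π) (intervalIntegral.intervalIntegral_re hint)).symm

theorem hasDerivAt_re_moment (k : ℕ) (x : ℝ) :
    HasDerivAt (fun x => (rot * moment k x).re / π) ((rot * moment (k + 1) x).re / π) x :=
  (reCLM.hasFDerivAt.comp_hasDerivAt x ((hasDerivAt_moment k x).const_mul rot)).div_const π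

end Airy

theorem hasDerivAt_airyAi (x : ℝ) :
    HasDerivAt airyAi ((Airy.rot * Airy.moment 1 x).re / π) x := by
  rw [show airyAi = _ from funext Airy.airyAi_eq]
  exact Airy.hasDerivAt_re_moment 0 x

theorem differentiable_airyAi : Differentiable ℝ airyAi :=
  fun x => (hasDerivAt_airyAi x).differentiableAt

theorem hasDerivAt_deriv_airyAi (x : ℝ) : HasDerivAt (deriv airyAi) (x * airyAi x) x := by
  rw [funext fun x => (hasDerivAt_airyAi x).deriv, Airy.airyAi_eq]
  convert Airy.hasDerivAt_re_moment 1 x using 1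
  rw [Airy.moment_two]
  simp [div_eq_mul_inv]
  ring

end

theorem Monotone.continuous_of_isOpen_range {g : ℝ → ℝ} (hg : Monotone g)
    (hr : IsOpen (range g)) : Continuous g :=
  continuous_iff_continuousAt.2 fun b =>
    continuousAt_of_monotoneOn_of_image_mem_nhds (hg.monotoneOn univ) univ_mem
      (by rw [image_univ]; exact hr.mem_nhds (mem_range_self b))

theorem hasDerivAt_of_leftInverse_of_deriv_pos {β β' g : ℝ → ℝ} {J : Set ℝ}
    (hJo : IsOpen J) (hJc : Convex ℝ J) (hβ : ∀ μ ∈ J, HasDerivAt β (β' μ) μ)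
    (hβ' : ∀ μ ∈ J, 0 < β' μ) (hgJ : ∀ b, g b ∈ J) (hβg : Function.LeftInverse β g) (b : ℝ) :
    HasDerivAt g (β' (g b))⁻¹ b := by
  have hmono : StrictMonoOn β J :=
    strictMonoOn_of_deriv_pos hJc (fun μ hμ => (hβ μ hμ).continuousAt.continuousWithinAt)
      (fun μ hμ => by rw [hJo.interior_eq] at hμ; rw [(hβ μ hμ).deriv]; exact hβ' μ hμ)
  have hg : Monotone g := fun b b' hbb' =>
    hmono.le_iff_le (hgJ b) (hgJ b') |>.1 (by rwa [hβg b, hβg b'])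
  have hrange : range g = J := by
    refine (range_subset_iff.2 hgJ).antisymm fun μ hμ => ⟨β μ, ?_⟩
    exact hmono.injOn (hgJ _) hμ (hβg (β μ))
  refine HasDerivAt.of_local_left_inverse ?_ (hβ _ (hgJ b)) (hβ' _ (hgJ b)).ne'
    (Eventually.of_forall hβg)
  exact (hg.continuous_of_isOpen_range (hrange ▸ hJo)).continuousAt

theorem hasDerivAt_riccati_of_airy_equation {y y' : ℝ → ℝ}
    (hy : ∀ x, HasDerivAt y (y' x) x) (hy' : ∀ x, HasDerivAt y' (x * y x) x) {μ : ℝ}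
    (hμ : y (-μ) ≠ 0) :
    HasDerivAt (fun μ => y' (-μ) / y (-μ)) (μ + (y' (-μ) / y (-μ)) ^ 2) μ := by
  have hnum := (hy' (-μ)).comp μ (hasDerivAt_neg μ)
  have hden := (hy (-μ)).comp μ (hasDerivAt_neg μ)
  refine (hnum.div hden hμ).congr_deriv ?_
  simp only [Function.comp_def]
  field_simp
  ring

theorem apply_ne_zero_between_consecutive_zeros {F : ℝ → ℝ} {a : ℕ → ℝ}
    (haanti : ∀ k ≥ 1, a (k + 1) < a k) (haall : ∀ x < 0, F x = 0 → ∃ k ≥ 1, a k = x)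
    {n : ℕ} (hn : 1 ≤ n) {x : ℝ} (hx : x ∈ Ioo (a (n + 1)) (a n)) (hx0 : x < 0) : F x ≠ 0 := by
  intro hFx
  obtain ⟨k, hk, rfl⟩ := haall x hx0 hFx
  have ha : StrictAntiOn a (Ici 1) := strictAntiOn_Ici_of_lt_pred fun m hm => by
    simpa [Nat.sub_add_cancel hm.le] using haanti (m - 1) (by omega)
  rcases le_or_gt k n with hkn | hkn
  · exact hx.2.not_ge (ha.antitoneOn hk hn hkn)
  · exact hx.1.not_ge (ha.antitoneOn (by simp) hk hkn)

theorem eigenvalue_derivative_in_b_general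
    (a : ℕ → ℝ)
    (haneg : ∀ k ≥ 1, a k < 0)
    (haanti : ∀ k ≥ 1, a (k + 1) < a k)
    (haall : ∀ x < 0, airyAi x = 0 → ∃ k ≥ 1, a k = x)
    (n : ℕ) (hn : 2 ≤ n)
    (lam : ℝ → ℝ)
    (hroot : ∀ b, deriv airyAi (-(lam b)) - b * airyAi (-(lam b)) = 0)
    (hmem : ∀ b, lam b ∈ Set.Ioo (-(a (n - 1))) (-(a n))) :
    ContDiff ℝ 1 lam ∧ ∀ b, HasDerivAt lam (1 / (lam b + b ^ 2)) b := by
  set J := Ioo (-(a (n - 1))) (-(a n))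
  have hJpos : ∀ μ ∈ J, 0 < μ := fun μ hμ => (neg_pos.2 (haneg _ (by omega))).trans hμ.1
  have hAi : ∀ μ ∈ J, airyAi (-μ) ≠ 0 := fun μ hμ =>
    apply_ne_zero_between_consecutive_zeros haanti haall (n := n - 1) (by omega)
      (by rw [Nat.sub_add_cancel (by omega)]; exact ⟨by linarith [hμ.2], by linarith [hμ.1]⟩)
      (by linarith [hJpos μ hμ])
  have hinv : Function.LeftInverse (fun μ => deriv airyAi (-μ) / airyAi (-μ)) lam := fun b =>
    (div_eq_iff (hAi _ (hmem b))).2 (by linarith [hroot b])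
  have hriccati_pos : ∀ μ ∈ J, 0 < μ + (deriv airyAi (-μ) / airyAi (-μ)) ^ 2 := fun μ hμ =>
    add_pos_of_pos_of_nonneg (hJpos μ hμ) (sq_nonneg _)
  have hderiv : ∀ b, HasDerivAt lam (1 / (lam b + b ^ 2)) b := fun b => by
    simpa [hinv b] using hasDerivAt_of_leftInverse_of_deriv_pos isOpen_Ioo (convex_Ioo _ _)
      (fun μ hμ => hasDerivAt_riccati_of_airy_equation
        (fun x => (differentiable_airyAi x).hasDerivAt) hasDerivAt_deriv_airyAi (hAi μ hμ))
      hriccati_pos hmem hinv b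
  have hcont : Continuous lam := continuous_iff_continuousAt.2 fun b => (hderiv b).continuousAt
  refine ⟨contDiff_one_iff_deriv.2 ⟨fun b => (hderiv b).differentiableAt, ?_⟩, hderiv⟩
  rw [funext fun b => (hderiv b).deriv]
  exact continuous_const.div (by fun_prop) fun b => by
    simpa [hinv b] using (hriccati_pos _ (hmem b)).ne'

/-- for n ≥ 2, the map b ↦ λ_n(b), where λ_n(b) is the unique root of
Ai'(-λ) - b Ai(-λ) = 0 in (-a_{n-1}, -a_n) (a_k the zeros of Ai), is continuously
differentiable on ℝ with λ_n'(b) = 1/(λ_n(b) + b²). -/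
theorem eigenvalue_derivative_in_b
    (a : ℕ → ℝ)
    (hazero : ∀ k ≥ 1, airyAi (a k) = 0)
    (haneg : ∀ k ≥ 1, a k < 0)
    (haanti : ∀ k ≥ 1, a (k + 1) < a k)
    (haall : ∀ x < 0, airyAi x = 0 → ∃ k ≥ 1, a k = x)
    (n : ℕ) (hn : 2 ≤ n)
    (lam : ℝ → ℝ)
    (hroot : ∀ b, deriv airyAi (-(lam b)) - b * airyAi (-(lam b)) = 0)
    (hmem : ∀ b, lam b ∈ Set.Ioo (-(a (n - 1))) (-(a n)))
    (huniq : ∀ b μ, deriv airyAi (-μ) - b * airyAi (-μ) = 0 →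
      μ ∈ Set.Ioo (-(a (n - 1))) (-(a n)) → μ = lam b) :
    ContDiff ℝ 1 lam ∧ ∀ b, HasDerivAt lam (1 / (lam b + b ^ 2)) b :=
  eigenvalue_derivative_in_b_general a haneg haanti haall n hn lam hroot hmem
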